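/- Let W : Matrix (Fin 3) (Fin 2) ℝ × Matrix (Fin 3) (Fin 2) ℝ → ℝ be invariant under superposed drilling rotations, i.e. W(R F, R K + e₃ tᵀ) = W(F, K) for every special orthogonal R with R e₃ = e₃, every t ∈ ℝ², and all F, K. Then on the set of orientation-positive configurations, W depends only on the invariants (Fᵀ F, Fᵀ e₃, Fᵀ C K): for all F, K, F', K' with det [F.col 0 | F.col 1 | e₃] > 0, det [F'.col 0 | F'.col 1 | e₃] > 0, Fᵀ F = F'ᵀ F', Fᵀ e₃ = F'ᵀ e₃ and Fᵀ C K = F'ᵀ C K', one has W(F, K) = W(F', K'). (This is the necessity part of the paper's representation theorem: the strain energy of a shell without drilling rotations can be represented as W = Ŵ(FᵀF, Fᵀd₃, FᵀGrad_s d₃).) -/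

import Mathlib

open Matrix

/-!
Adjoining `e₃` as a third column turns `F` into the square matrix `aug F`, whose Gram
matrix is determined by `FᵀF` and `Fᵀe₃`. Equal Gram matrices and positive determinants
make `R := aug F' * (aug F)⁻¹` a rotation; it fixes `e₃` and maps `F` to `F'`. A rotation
fixing `e₃` commutes with `C`, so the last invariant gives `F'ᵀ C (K' - R K) = 0`; since
also `e₃ᵀ C = 0` and `aug F'` is invertible, `C (K' - R K) = 0`, i.e. `K' - R K = e₃ tᵀ`.
Thus `(F', K')` is a drilling rotation of `(F, K)`.
-/

/-- The unit normal `e₃` in the fixed material frame. -/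
def e3 : Fin 3 → ℝ := ![0, 0, 1]

/-- The alternator matrix `C` of the map `v ↦ e₃ × v`. -/
def altC : Matrix (Fin 3) (Fin 3) ℝ := !![0, -1, 0; 1, 0, 0; 0, 0, 0]

/-- The 3×3 matrix `[F.col 0 | F.col 1 | e₃]` whose columns are the two columns
of `F` together with `e₃`. -/
def aug (F : Matrix (Fin 3) (Fin 2) ℝ) : Matrix (Fin 3) (Fin 3) ℝ :=
  Matrix.of fun i j => ![F i 0, F i 1, e3 i] j

section Gram

variable {n α : Type*} [Fintype n] [DecidableEq n]

theorem transpose_mul_self_eq_one_of_gram_eq [CommRing α] {A B : Matrix n n α}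
    (hA : IsUnit A.det) (h : Aᵀ * A = Bᵀ * B) : (B * A⁻¹)ᵀ * (B * A⁻¹) = 1 := by
  rw [transpose_mul, transpose_nonsing_inv]
  calc Aᵀ⁻¹ * Bᵀ * (B * A⁻¹) = Aᵀ⁻¹ * (Aᵀ * A) * A⁻¹ := by
        rw [h]; simp only [Matrix.mul_assoc]
    _ = 1 := by
        rw [← Matrix.mul_assoc, nonsing_inv_mul _ (by rwa [det_transpose]), Matrix.one_mul,
          mul_nonsing_inv _ hA]

theorem det_eq_of_gram_eq [CommRing α] [LinearOrder α] [IsStrictOrderedRing α]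
    {A B : Matrix n n α} (hA : 0 < A.det) (hB : 0 < B.det) (h : Aᵀ * A = Bᵀ * B) :
    A.det = B.det := by
  have hsq : A.det ^ 2 = B.det ^ 2 := by
    simpa only [det_mul, det_transpose, sq] using congrArg det h
  exact (pow_left_inj₀ hA.le hB.le two_ne_zero).mp hsq

end Gram

theorem aug_mulVec_e3 (F : Matrix (Fin 3) (Fin 2) ℝ) : aug F *ᵥ e3 = e3 := by
  ext i
  fin_cases i <;> simp [aug, mulVec, dotProduct, Fin.sum_univ_three, e3]

theorem mul_aug {R : Matrix (Fin 3) (Fin 3) ℝ} (hR : R *ᵥ e3 = e3)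
    (F : Matrix (Fin 3) (Fin 2) ℝ) : R * aug F = aug (R * F) := by
  ext i j
  fin_cases j
  · simp [aug, mul_apply]
  · simp [aug, mul_apply]
  · simpa [aug, mul_apply, mulVec, dotProduct] using congrFun hR i

theorem aug_injective : Function.Injective aug := by
  intro F F' h
  ext i j
  fin_cases j
  · simpa [aug] using congrFun (congrFun h i) 0
  · simpa [aug] using congrFun (congrFun h i) 1

theorem gram_aug_eq {F F' : Matrix (Fin 3) (Fin 2) ℝ} (hFF : Fᵀ * F = F'ᵀ * F')
    (hFe : Fᵀ *ᵥ e3 = F'ᵀ *ᵥ e3) : (aug F)ᵀ * aug F = (aug F')ᵀ * aug F' := by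
  have hFF' := fun i j => congrFun (congrFun hFF i) j
  have hFe' := congrFun hFe
  simp only [mul_apply, transpose_apply, Fin.sum_univ_three] at hFF'
  simp only [mulVec, dotProduct, transpose_apply, Fin.sum_univ_three, e3] at hFe'
  ext i j
  fin_cases i <;> fin_cases j <;>
    simp [aug, e3, mul_apply, Fin.sum_univ_three] <;>
    simp_all

theorem exists_rotation_of_invariants_eq {F F' : Matrix (Fin 3) (Fin 2) ℝ}
    (hF : 0 < (aug F).det) (hF' : 0 < (aug F').det) (hFF : Fᵀ * F = F'ᵀ * F')
    (hFe : Fᵀ *ᵥ e3 = F'ᵀ *ᵥ e3) :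
    ∃ R : Matrix (Fin 3) (Fin 3) ℝ,
      Rᵀ * R = 1 ∧ R.det = 1 ∧ R *ᵥ e3 = e3 ∧ R * F = F' := by
  have hG := gram_aug_eq hFF hFe
  have hunit : IsUnit (aug F).det := hF.ne'.isUnit
  have hRA : aug F' * (aug F)⁻¹ * aug F = aug F' := nonsing_inv_mul_cancel_right _ _ hunit
  have he : (aug F' * (aug F)⁻¹) *ᵥ e3 = e3 := by
    conv_lhs => rw [← aug_mulVec_e3 F]
    rw [mulVec_mulVec, hRA, aug_mulVec_e3]
  refine ⟨aug F' * (aug F)⁻¹, transpose_mul_self_eq_one_of_gram_eq hunit hG, ?_, he, ?_⟩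
  · rw [det_mul, det_nonsing_inv, ← det_eq_of_gram_eq hF hF' hG, Ring.inverse_eq_inv',
      mul_inv_cancel₀ hF.ne']
  · exact aug_injective (by rw [← mul_aug he, hRA])

theorem mul_altC_comm {R : Matrix (Fin 3) (Fin 3) ℝ} (hR : Rᵀ * R = 1) (hdet : R.det = 1)
    (he : R *ᵥ e3 = e3) : R * altC = altC * R := by
  have heT : Rᵀ *ᵥ e3 = e3 := by
    conv_lhs => rw [← he]
    rw [mulVec_mulVec, hR, one_mulVec]
  have h02 : R 0 2 = 0 := by simpa [mulVec, dotProduct, Fin.sum_univ_three, e3] using congrFun he 0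
  have h12 : R 1 2 = 0 := by simpa [mulVec, dotProduct, Fin.sum_univ_three, e3] using congrFun he 1
  have h20 : R 2 0 = 0 := by simpa [mulVec, dotProduct, Fin.sum_univ_three, e3] using congrFun heT 0
  have h21 : R 2 1 = 0 := by simpa [mulVec, dotProduct, Fin.sum_univ_three, e3] using congrFun heT 1
  have h22 : R 2 2 = 1 := by simpa [mulVec, dotProduct, Fin.sum_univ_three, e3] using congrFun he 2
  have hR00 : R 0 0 * R 0 0 + R 1 0 * R 1 0 = 1 := by
    simpa [mul_apply, Fin.sum_univ_three, h20] using congrFun (congrFun hR 0) 0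
  have hR01 : R 0 0 * R 0 1 + R 1 0 * R 1 1 = 0 := by
    simpa [mul_apply, Fin.sum_univ_three, h20] using congrFun (congrFun hR 0) 1
  have hd : R 0 0 * R 1 1 - R 0 1 * R 1 0 = 1 := by
    simpa [det_fin_three, h02, h12, h20, h21, h22] using hdet
  have hb : R 0 1 = -R 1 0 := by linear_combination (-R 0 1) * hR00 + R 0 0 * hR01 - R 1 0 * hd
  have ha : R 1 1 = R 0 0 := by linear_combination (-R 1 1) * hR00 + R 0 0 * hd + R 1 0 * hR01
  ext i j
  fin_cases i <;> fin_cases j <;>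
    simp [mul_apply, Fin.sum_univ_three, altC, h02, h12, h20, h21, ha, hb]

theorem eq_vecMulVec_e3_of_altC_mul_eq_zero {n : Type*} {M : Matrix (Fin 3) n ℝ}
    (h : altC * M = 0) : M = vecMulVec e3 (M 2) := by
  ext i j
  have h0 := congrFun (congrFun h 0) j
  have h1 := congrFun (congrFun h 1) j
  simp [mul_apply, Fin.sum_univ_three, altC] at h0 h1
  fin_cases i <;> simp [vecMulVec_apply, e3, h0, h1]

theorem transpose_aug_mul_altC_mul_eq_zero {n : Type*} {F : Matrix (Fin 3) (Fin 2) ℝ}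
    {M : Matrix (Fin 3) n ℝ} (h : Fᵀ * altC * M = 0) : (aug F)ᵀ * (altC * M) = 0 := by
  ext i j
  have h0 := congrFun (congrFun h 0) j
  have h1 := congrFun (congrFun h 1) j
  simp only [Matrix.mul_assoc] at h0 h1
  fin_cases i <;> simp_all [mul_apply, vecMul, dotProduct, Fin.sum_univ_three, aug, altC, e3]

theorem exists_shift_of_rotation {R : Matrix (Fin 3) (Fin 3) ℝ}
    {F K K' : Matrix (Fin 3) (Fin 2) ℝ}
    (hR : Rᵀ * R = 1) (hdet : R.det = 1) (he : R *ᵥ e3 = e3) (hRF : IsUnit (aug (R * F)).det)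
    (hK : Fᵀ * altC * K = (R * F)ᵀ * altC * K') : ∃ t, K' = R * K + vecMulVec e3 t := by
  have hM : (R * F)ᵀ * altC * (K' - R * K) = 0 := by
    calc (R * F)ᵀ * altC * (K' - R * K)
        = (R * F)ᵀ * altC * K' - Fᵀ * (Rᵀ * R) * altC * K := by
          simp only [Matrix.mul_sub, transpose_mul, Matrix.mul_assoc]
          rw [← Matrix.mul_assoc altC R K, ← mul_altC_comm hR hdet he,
            Matrix.mul_assoc R altC K]
      _ = 0 := by rw [hR, Matrix.mul_one, hK, sub_self]
  have hCM : altC * (K' - R * K) = 0 := by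
    have h := transpose_aug_mul_altC_mul_eq_zero hM
    rw [← nonsing_inv_mul_cancel_left _ (altC * (K' - R * K)) (by rwa [det_transpose]), h,
      Matrix.mul_zero]
  exact ⟨(K' - R * K) 2, by rw [← eq_vecMulVec_e3_of_altC_mul_eq_zero hCM, add_sub_cancel]⟩

theorem drilling_invariant_energy_representation
    (W : Matrix (Fin 3) (Fin 2) ℝ × Matrix (Fin 3) (Fin 2) ℝ → ℝ)
    (hinv : ∀ (R : Matrix (Fin 3) (Fin 3) ℝ) (t : Fin 2 → ℝ)
      (F K : Matrix (Fin 3) (Fin 2) ℝ),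
      Rᵀ * R = 1 → R.det = 1 → R.mulVec e3 = e3 →
      W (R * F, R * K + vecMulVec e3 t) = W (F, K)) :
    ∀ (F K F' K' : Matrix (Fin 3) (Fin 2) ℝ),
      0 < (aug F).det → 0 < (aug F').det →
      Fᵀ * F = F'ᵀ * F' →
      Fᵀ.mulVec e3 = F'ᵀ.mulVec e3 →
      Fᵀ * altC * K = F'ᵀ * altC * K' →
      W (F, K) = W (F', K') := by
  intro F K F' K' hF hF' hFF hFe hFK
  obtain ⟨R, hR, hdet, he, rfl⟩ := exists_rotation_of_invariants_eq hF hF' hFF hFe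
  obtain ⟨t, rfl⟩ := exists_shift_of_rotation hR hdet he hF'.ne'.isUnit hFK
  exact (hinv R t F K hR hdet he).symm
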